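/- Let R(θ) = 400θ⁴ − 552θ³ + 169θ² + 14θ + 1. Then R(θ) > 0 for every θ ∈ (0,1). Moreover, for θ ∈ (0,1) with θ ≠ 1/2, defining Le₋(θ) = (20θ² − 13θ − 1 − √R(θ))/(2θ−1) and Le₊(θ) = (20θ² − 13θ − 1 + √R(θ))/(2θ−1), one has: Le₋(θ) > 1 if and only if θ < 1/2, and Le₊(θ) > 1 if and only if θ > (4+√22)/12. -/

import Mathlib

/-!
Writing `q = 20θ² − 15θ`, one has `Le∓ − 1 = (q ∓ √R) / (2θ − 1)` and
`R = q² + (2θ − 1)(24θ² − 16θ − 1)`. So every criterion comes down to comparing `√R` with `|q|`,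
i.e. to the signs of `2θ − 1` and of the quadratic `24θ² − 16θ − 1`, whose positive root is
`(4 + √22)/12`. Positivity of `R` follows from `25 R = (100θ² − 69θ − 3)² + 16 (2θ − 1)²`.
-/

/-- R(θ) = 400θ⁴ − 552θ³ + 169θ² + 14θ + 1. -/
noncomputable def Rpoly (θ : ℝ) : ℝ :=
  400 * θ ^ 4 - 552 * θ ^ 3 + 169 * θ ^ 2 + 14 * θ + 1

/-- Le₋(θ). -/
noncomputable def LeMinus (θ : ℝ) : ℝ :=
  (20 * θ ^ 2 - 13 * θ - 1 - Real.sqrt (Rpoly θ)) / (2 * θ - 1)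

/-- Le₊(θ). -/
noncomputable def LePlus (θ : ℝ) : ℝ :=
  (20 * θ ^ 2 - 13 * θ - 1 + Real.sqrt (Rpoly θ)) / (2 * θ - 1)

theorem abs_lt_sqrt_sq_add_iff {q e : ℝ} : |q| < √(q ^ 2 + e) ↔ 0 < e := by
  rw [Real.lt_sqrt (abs_nonneg q), sq_abs, lt_add_iff_pos_right]

theorem Rpoly_mul_eq_sq_add_sq (θ : ℝ) :
    25 * Rpoly θ = (100 * θ ^ 2 - 69 * θ - 3) ^ 2 + 16 * (2 * θ - 1) ^ 2 := by
  unfold Rpoly; ring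

theorem Rpoly_pos (θ : ℝ) : 0 < Rpoly θ := by
  rcases eq_or_ne θ (1 / 2) with rfl | hθ
  · norm_num [Rpoly]
  · have : 0 < 16 * (2 * θ - 1) ^ 2 := by
      have : 2 * θ - 1 ≠ 0 := fun h => hθ (by linarith)
      positivity
    nlinarith [Rpoly_mul_eq_sq_add_sq θ, sq_nonneg (100 * θ ^ 2 - 69 * θ - 3)]

theorem Rpoly_eq_sq_add_mul (θ : ℝ) :
    Rpoly θ = (20 * θ ^ 2 - 15 * θ) ^ 2 + (2 * θ - 1) * (24 * θ ^ 2 - 16 * θ - 1) := by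
  unfold Rpoly; ring

theorem abs_lt_sqrt_Rpoly_iff {θ : ℝ} :
    |20 * θ ^ 2 - 15 * θ| < √(Rpoly θ) ↔ 0 < (2 * θ - 1) * (24 * θ ^ 2 - 16 * θ - 1) := by
  rw [Rpoly_eq_sq_add_mul, abs_lt_sqrt_sq_add_iff]

theorem half_lt_threshold : 1 / 2 < (4 + √22) / 12 := by
  have : 2 < √22 := (Real.lt_sqrt zero_le_two).2 (by norm_num)
  linarith

theorem quadratic_pos_iff {θ : ℝ} (hθ : 1 / 3 < θ) :
    0 < 24 * θ ^ 2 - 16 * θ - 1 ↔ (4 + √22) / 12 < θ := by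
  have hsq : 6 * (24 * θ ^ 2 - 16 * θ - 1) = (12 * θ - 4) ^ 2 - 22 := by ring
  rw [div_lt_iff₀ (by norm_num), ← lt_sub_iff_add_lt', Real.sqrt_lt' (by linarith)]
  constructor <;> intro h <;> linarith

theorem quadratic_neg {θ : ℝ} (h0 : 0 < θ) (h : θ < 2 / 3) : 24 * θ ^ 2 - 16 * θ - 1 < 0 := by
  nlinarith

theorem quadratic_pos {θ : ℝ} (h : 3 / 4 ≤ θ) : 0 < 24 * θ ^ 2 - 16 * θ - 1 := by
  nlinarith

theorem one_lt_LeMinus {θ : ℝ} (h0 : 0 < θ) (h : θ < 1 / 2) : 1 < LeMinus θ := by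
  have hq : 20 * θ ^ 2 - 15 * θ < 0 := by nlinarith
  rw [LeMinus, lt_div_iff_of_neg (by linarith)]
  linarith [Real.sqrt_nonneg (Rpoly θ)]

theorem LeMinus_le_one {θ : ℝ} (h : 1 / 2 < θ) : LeMinus θ ≤ 1 := by
  rw [LeMinus, div_le_one (by linarith)]
  suffices 20 * θ ^ 2 - 15 * θ ≤ √(Rpoly θ) by linarith
  rcases le_or_gt (20 * θ ^ 2 - 15 * θ) 0 with hq | hq
  · exact hq.trans (Real.sqrt_nonneg _)
  · have hc := quadratic_pos (θ := θ) (by nlinarith)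
    exact (le_abs_self _).trans (abs_lt_sqrt_Rpoly_iff.2 (mul_pos (by linarith) hc)).le

theorem LePlus_le_one {θ : ℝ} (h0 : 0 < θ) (h : θ < 1 / 2) : LePlus θ ≤ 1 := by
  have hc := quadratic_neg h0 (by linarith)
  have hs := abs_lt_sqrt_Rpoly_iff.2 (mul_pos_of_neg_of_neg (by linarith) hc)
  rw [LePlus, div_le_one_of_neg (by linarith)]
  linarith [neg_abs_le (20 * θ ^ 2 - 15 * θ)]

theorem one_lt_LePlus_iff {θ : ℝ} (h : 1 / 2 < θ) : 1 < LePlus θ ↔ (4 + √22) / 12 < θ := by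
  have hd : 0 < 2 * θ - 1 := by linarith
  rw [LePlus, one_lt_div hd, ← quadratic_pos_iff (by linarith)]
  constructor
  · intro hs
    by_contra! hc
    have hθ : θ < 3 / 4 := by
      by_contra! hθ
      exact (quadratic_pos hθ).not_ge hc
    have hq : 20 * θ ^ 2 - 15 * θ < 0 := by nlinarith
    have hs' : √(Rpoly θ) ≤ |20 * θ ^ 2 - 15 * θ| := not_lt.1 fun hlt =>
      ((mul_pos_iff_of_pos_left hd).1 (abs_lt_sqrt_Rpoly_iff.1 hlt)).not_ge hc
    rw [abs_of_neg hq] at hs'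
    linarith
  · intro hc
    have hs := abs_lt_sqrt_Rpoly_iff.2 (mul_pos hd hc)
    linarith [neg_abs_le (20 * θ ^ 2 - 15 * θ)]

/-- R > 0 on (0,1); for θ ∈ (0,1), θ ≠ 1/2 one has
Le₋(θ) > 1 ↔ θ < 1/2, and Le₊(θ) > 1 ↔ θ > (4+√22)/12. -/
theorem R_pos_and_Le_criteria :
    (∀ θ : ℝ, 0 < θ → θ < 1 → 0 < Rpoly θ) ∧
    (∀ θ : ℝ, 0 < θ → θ < 1 → θ ≠ 1 / 2 →
      (1 < LeMinus θ ↔ θ < 1 / 2) ∧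
      (1 < LePlus θ ↔ (4 + Real.sqrt 22) / 12 < θ)) := by
  refine ⟨fun θ _ _ => Rpoly_pos θ, fun θ h0 _ hne => ?_⟩
  rcases hne.lt_or_gt with h | h
  · exact ⟨iff_of_true (one_lt_LeMinus h0 h) h,
      iff_of_false (LePlus_le_one h0 h).not_gt (by linarith [half_lt_threshold])⟩
  · exact ⟨iff_of_false (LeMinus_le_one h).not_gt (by linarith), one_lt_LePlus_iff h⟩
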